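/- arXiv:2308.11602 — 5 statements merged into one kernel-verified Lean document; each statement's English description precedes it below -/
import Mathlib

section
/- Let S be a commutative, cancellative monoid, s ∈ S, and m ∈ 𝒜(S) with s − m ∈ S and L(s) finite. If L(s) ≠ L(s − m) + 1, then for every finitely supported tuple (c_a) ∈ ℕ^{𝒜(S_red)∖{[m]}} such that s is associate to φ_S(c_a) and |(c_a)| = L(s), and for every (c_a') ∈ MinRepl_m(S) with (c_a') ≤ (c_a) coordinatewise, one has L(φ_S(c_a')) ≠ L(−m + φ_S(c_a')) + 1. -/
/-!
Suppose `L(s') = L(t') + 1`. Write the longest factorization `c` of `s` as `c' + d`. Appending `d`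
to a factorization of `s' ~ φ(c')` gives one of `s`, so `c'` is longest for `s'` and
`L(s) = L(s') + |d| = L(t') + 1 + |d|`. Since `t ~ t' + φ(d)`, appending `d` again gives
`L(t') + |d| ≤ L(t)`, and appending `m` gives `L(t) + 1 ≤ L(s)`; hence `L(s) = L(t) + 1`.
If `Z(t') = ∅` the convention `L(t') = 0` would break this, but then `|c'| = 1`, so `[m] + [t']`
is an atom, `t'` is a unit and `0 ∈ Z(t')`.
-/

namespace Paper

/-- The additive congruence on `S` identifying associate elements
(`s ∼ t` iff `s + u = t` for some additive unit `u`). -/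
def assocCon (S : Type*) [AddCancelCommMonoid S] : AddCon S where
  r s t := ∃ u : AddUnits S, s + (u : S) = t
  iseqv := by
    refine ⟨fun s => ⟨0, by simp⟩, ?_, ?_⟩
    · rintro s t ⟨u, rfl⟩
      exact ⟨-u, by rw [add_assoc, AddUnits.add_neg, add_zero]⟩
    · rintro s t w ⟨u, rfl⟩ ⟨v, rfl⟩
      exact ⟨u + v, by rw [AddUnits.val_add, add_assoc]⟩
  add' := by
    rintro a b c d ⟨u, rfl⟩ ⟨v, rfl⟩
    refine ⟨u + v, ?_⟩
    rw [AddUnits.val_add]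
    abel

/-- The reduced monoid `S_red = S / U(S)`. -/
abbrev Red (S : Type*) [AddCancelCommMonoid S] := (assocCon S).Quotient

variable {S : Type*} [AddCancelCommMonoid S]

/-- The class `[s]` of `s` in `S_red`. -/
def cls (s : S) : Red S := (assocCon S).mk' s

/-- `a` is an atom: a nonzero nonunit such that in any decomposition
`b + c = a`, one of `b`, `c` is a unit. -/
def IsAddAtom {M : Type*} [AddMonoid M] (a : M) : Prop :=
  a ≠ 0 ∧ ¬ IsAddUnit a ∧ ∀ b c : M, b + c = a → IsAddUnit b ∨ IsAddUnit c

/-- The length `|(c_a)|` of a tuple. -/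
def flen (c : Red S →₀ ℕ) : ℕ := c.sum fun _ n => n

/-- The factorization homomorphism `φ_S`. -/
def phi (c : Red S →₀ ℕ) : Red S := c.sum fun x n => n • x

/-- The set of factorizations `Z(s)`: finitely supported tuples indexed by the atoms
of `S_red` summing to `[s]`. -/
def ZSet (s : S) : Set (Red S →₀ ℕ) :=
  {c | (∀ x ∈ c.support, IsAddAtom x) ∧ phi c = cls s}

/-- The longest factorization length `L(s)`. -/
noncomputable def lenL (s : S) : ℕ := sSup (flen '' ZSet s)

/-- The shortest factorization length `ℓ(s)`. -/
noncomputable def lenl (s : S) : ℕ := sInf (flen '' ZSet s)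

/-- `L(s)` is (defined and) finite. -/
def LFinite (s : S) : Prop := (ZSet s).Nonempty ∧ BddAbove (flen '' ZSet s)

/-- `Repl_m(S)`: tuples over the atoms of `S_red` other than `[m]` whose evaluation,
after subtracting `m`, stays in `S`. -/
def ReplSet (m : S) : Set (Red S →₀ ℕ) :=
  {c | (∀ x ∈ c.support, IsAddAtom x ∧ x ≠ cls m) ∧ ∃ s t : S, cls s = phi c ∧ m + t = s}

/-- `MinRepl_m(S)`: the minimal elements of `Repl_m(S)` under the coordinatewise order. -/
def MinReplSet (m : S) : Set (Red S →₀ ℕ) :=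
  {c ∈ ReplSet m | ∀ c' ∈ ReplSet m, c' ≤ c → c' = c}

lemma cls_add (a b : S) : cls (a + b) = cls a + cls b := map_add _ a b

lemma cls_zero : cls (0 : S) = 0 := map_zero _

lemma cls_eq_iff {a b : S} : cls a = cls b ↔ ∃ u : AddUnits S, a + u = b :=
  (assocCon S).eq

lemma cls_surjective : Function.Surjective (cls : S → Red S) :=
  AddCon.mk'_surjective

lemma cls_eq_zero_iff {a : S} : cls a = 0 ↔ IsAddUnit a := by
  rw [← cls_zero, cls_eq_iff]
  exact ⟨fun ⟨u, hu⟩ => .of_add_eq_zero _ hu,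
    fun ⟨u, hu⟩ => ⟨-u, by rw [← hu, AddUnits.add_neg]⟩⟩

lemma Red.eq_zero_of_isAddUnit {x : Red S} (hx : IsAddUnit x) : x = 0 := by
  obtain ⟨u, rfl⟩ := hx
  obtain ⟨a, ha⟩ := cls_surjective (u : Red S)
  obtain ⟨b, hb⟩ := cls_surjective ((-u : AddUnits (Red S)) : Red S)
  have hab : cls (a + b) = 0 := by rw [cls_add, ha, hb, AddUnits.add_neg]
  rw [← ha, cls_eq_zero_iff]
  exact isAddUnit_of_add_isAddUnit_left (cls_eq_zero_iff.mp hab)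

lemma cls_add_left_cancel {m a b : S} (h : cls (m + a) = cls (m + b)) : cls a = cls b := by
  obtain ⟨u, hu⟩ := cls_eq_iff.mp h
  exact cls_eq_iff.mpr ⟨u, add_left_cancel (by rw [← add_assoc, hu])⟩

lemma isAddUnit_cls_iff {a : S} : IsAddUnit (cls a) ↔ IsAddUnit a :=
  ⟨fun h => cls_eq_zero_iff.mp (Red.eq_zero_of_isAddUnit h), fun h => h.map (assocCon S).mk'⟩

lemma isAddAtom_cls {m : S} (hm : IsAddAtom m) : IsAddAtom (cls m) := by
  refine ⟨fun h => hm.2.1 (cls_eq_zero_iff.mp h), fun h => hm.2.1 (isAddUnit_cls_iff.mp h), ?_⟩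
  intro b c hbc
  obtain ⟨b, rfl⟩ := cls_surjective b
  obtain ⟨c, rfl⟩ := cls_surjective c
  rw [← cls_add, cls_eq_iff] at hbc
  obtain ⟨u, hu⟩ := hbc
  simp only [isAddUnit_cls_iff]
  refine (hm.2.2 b (c + u) (by rw [← add_assoc, hu])).imp id fun h => ?_
  exact isAddUnit_of_add_isAddUnit_left h

lemma phi_zero : phi (0 : Red S →₀ ℕ) = 0 := Finsupp.sum_zero_index

lemma phi_add (c d : Red S →₀ ℕ) : phi (c + d) = phi c + phi d :=
  Finsupp.sum_add_index' zero_nsmul add_nsmul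

lemma phi_single (x : Red S) (n : ℕ) : phi (Finsupp.single x n) = n • x :=
  Finsupp.sum_single_index (zero_nsmul x)

lemma flen_add (c d : Red S →₀ ℕ) : flen (c + d) = flen c + flen d :=
  map_add Finsupp.degree c d

lemma flen_single (x : Red S) (n : ℕ) : flen (Finsupp.single x n) = n :=
  Finsupp.degree_single x n

lemma ZSet_congr {v w : S} (h : cls v = cls w) : ZSet v = ZSet w := by
  rw [ZSet, ZSet, h]

lemma mem_ZSet_of_le {c c' : Red S →₀ ℕ} {s s' : S} (hc : c ∈ ZSet s) (hle : c' ≤ c)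
    (hs' : cls s' = phi c') : c' ∈ ZSet s' :=
  ⟨fun x hx => hc.1 x (Finsupp.support_mono hle hx), hs'.symm⟩

lemma add_mem_ZSet {z z' : Red S →₀ ℕ} {v w : S} (hz : z ∈ ZSet v) (hz' : z' ∈ ZSet w) :
    z + z' ∈ ZSet (v + w) := by
  classical
  refine ⟨fun x hx => ?_, by rw [phi_add, hz.2, hz'.2, cls_add]⟩
  rcases Finset.mem_union.mp (Finsupp.support_add hx) with h | h
  exacts [hz.1 x h, hz'.1 x h]

lemma zero_mem_ZSet {t : S} (ht : IsAddUnit t) : 0 ∈ ZSet t :=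
  ⟨by simp, by rw [phi_zero, cls_eq_zero_iff.mpr ht]⟩

lemma single_mem_ZSet {m : S} (hm : IsAddAtom m) : Finsupp.single (cls m) 1 ∈ ZSet m :=
  ⟨fun _ hx => Finset.mem_singleton.mp (Finsupp.support_single_subset hx) ▸ isAddAtom_cls hm,
    by rw [phi_single, one_nsmul]⟩

lemma isAddAtom_cls_of_mem_ZSet_of_flen_eq_one {c : Red S →₀ ℕ} {s : S} (hc : c ∈ ZSet s)
    (h : flen c = 1) : IsAddAtom (cls s) := by
  obtain ⟨x, rfl⟩ := (Finsupp.sum_eq_one_iff c).mp h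
  rw [← hc.2, phi_single, one_nsmul]
  exact hc.1 x (by simp)

lemma flen_le_lenL {z : Red S →₀ ℕ} {s : S} (hb : BddAbove (flen '' ZSet s))
    (hz : z ∈ ZSet s) : flen z ≤ lenL s :=
  le_csSup hb ⟨z, hz, rfl⟩

lemma exists_flen_eq_lenL {s : S} (hne : (ZSet s).Nonempty)
    (hb : BddAbove (flen '' ZSet s)) : ∃ z ∈ ZSet s, flen z = lenL s :=
  Nat.sSup_mem (hne.image flen) hb

lemma lenL_eq_zero_of_ZSet_eq_empty {s : S} (h : ZSet s = ∅) : lenL s = 0 := by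
  rw [lenL, h, Set.image_empty, csSup_empty, bot_eq_zero]

lemma ZSet_nonempty_of_lenL_eq_lenL_add_one {m t' s' : S} {c' : Red S →₀ ℕ} (hm : IsAddAtom m)
    (ht' : m + t' = s') (hc' : c' ∈ ZSet s') (hc'L : lenL s' = flen c')
    (hL : lenL s' = lenL t' + 1) : (ZSet t').Nonempty := by
  by_contra hempty
  have hc'1 : flen c' = 1 := by
    rw [← hc'L, hL, lenL_eq_zero_of_ZSet_eq_empty (Set.not_nonempty_iff_eq_empty.mp hempty)]
  have hatom := isAddAtom_cls_of_mem_ZSet_of_flen_eq_one hc' hc'1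
  rw [← ht', cls_add] at hatom
  rcases hatom.2.2 _ _ rfl with hu | hu
  · exact hm.2.1 (isAddUnit_cls_iff.mp hu)
  · exact hempty ⟨0, zero_mem_ZSet (isAddUnit_cls_iff.mp hu)⟩

section LongestFactorizations

variable {s v w : S}

lemma flen_add_flen_le_lenL (hb : BddAbove (flen '' ZSet s)) (h : cls (v + w) = cls s)
    {z e : Red S →₀ ℕ} (hz : z ∈ ZSet v) (he : e ∈ ZSet w) :
    flen z + flen e ≤ lenL s := by
  rw [← flen_add]
  exact flen_le_lenL hb (ZSet_congr h ▸ add_mem_ZSet hz he)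

lemma bddAbove_flen_ZSet_of_cls_add_eq (hb : BddAbove (flen '' ZSet s))
    (h : cls (v + w) = cls s) (hw : (ZSet w).Nonempty) : BddAbove (flen '' ZSet v) := by
  obtain ⟨e, he⟩ := hw
  refine ⟨lenL s, ?_⟩
  rintro _ ⟨z, hz, rfl⟩
  exact (Nat.le_add_right _ _).trans (flen_add_flen_le_lenL hb h hz he)

lemma lenL_add_flen_le (hb : BddAbove (flen '' ZSet s)) (h : cls (v + w) = cls s)
    {e : Red S →₀ ℕ} (hv : (ZSet v).Nonempty) (he : e ∈ ZSet w) :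
    lenL v + flen e ≤ lenL s := by
  obtain ⟨z, hz, hzL⟩ :=
    exists_flen_eq_lenL hv (bddAbove_flen_ZSet_of_cls_add_eq hb h ⟨e, he⟩)
  exact hzL ▸ flen_add_flen_le_lenL hb h hz he

end LongestFactorizations

lemma lenL_eq_flen_of_le {s s' : S} {c c' : Red S →₀ ℕ} (hb : BddAbove (flen '' ZSet s))
    (hc : c ∈ ZSet s) (hcL : flen c = lenL s) (hle : c' ≤ c) (hs' : cls s' = phi c') :
    lenL s' = flen c' := by
  obtain ⟨r, hr⟩ := cls_surjective (phi (c - c'))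
  have hcd : c' + (c - c') = c := add_tsub_cancel_of_le hle
  have hs : cls (s' + r) = cls s := by rw [cls_add, hs', hr, ← phi_add, hcd, hc.2]
  have hd : c - c' ∈ ZSet r := mem_ZSet_of_le hc tsub_le_self hr
  refine IsGreatest.csSup_eq ⟨⟨c', mem_ZSet_of_le hc hle hs', rfl⟩, ?_⟩
  rintro _ ⟨z, hz, rfl⟩
  have hlen : flen c = flen c' + flen (c - c') := by rw [← flen_add, hcd]
  have := flen_add_flen_le_lenL hb hs hz hd
  omega

theorem statement2 {S : Type*} [AddCancelCommMonoid S] (s m t : S)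
    (hm : IsAddAtom m) (ht : m + t = s) (hfin : LFinite s)
    (hne : lenL s ≠ lenL t + 1) :
    ∀ c : Red S →₀ ℕ, (∀ x ∈ c.support, IsAddAtom x ∧ x ≠ cls m) →
      cls s = phi c → flen c = lenL s →
      ∀ c' ∈ MinReplSet m, c' ≤ c →
        ∀ s' t' : S, cls s' = phi c' → m + t' = s' → lenL s' ≠ lenL t' + 1 := by
  intro c hc hcs hcL c' _ hle s' t' hs' ht' hL
  have hcZ : c ∈ ZSet s := ⟨fun x hx => (hc x hx).1, hcs.symm⟩
  have hLs' : lenL s' = flen c' := lenL_eq_flen_of_le hfin.2 hcZ hcL hle hs'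
  have hc' : c' ∈ ZSet s' := mem_ZSet_of_le hcZ hle hs'
  obtain ⟨z, hz⟩ := ZSet_nonempty_of_lenL_eq_lenL_add_one hm ht' hc' hLs' hL
  obtain ⟨r, hr⟩ := cls_surjective (phi (c - c'))
  have hd : c - c' ∈ ZSet r := mem_ZSet_of_le hcZ tsub_le_self hr
  have hlen : flen c = flen c' + flen (c - c') := by rw [← flen_add, add_tsub_cancel_of_le hle]
  have htr : cls (t' + r) = cls t := by
    refine cls_add_left_cancel (m := m) ?_
    rw [← add_assoc, ht', ht, cls_add, hs', hr, ← phi_add, add_tsub_cancel_of_le hle, hcs]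
  have htm : cls (t + m) = cls s := by rw [add_comm, ht]
  have hbt := bddAbove_flen_ZSet_of_cls_add_eq hfin.2 htm ⟨_, single_mem_ZSet hm⟩
  have hlow := lenL_add_flen_le hbt htr ⟨z, hz⟩ hd
  have hhigh := lenL_add_flen_le hfin.2 htm ⟨_, ZSet_congr htr ▸ add_mem_ZSet hz hd⟩
    (single_mem_ZSet hm)
  rw [flen_single] at hhigh
  omega

end Paper
end

section
/- Let S = ⟨n_1, …, n_k⟩ be a numerical semigroup minimally generated by n_1, …, n_k ∈ ℕ with n_1 < ⋯ < n_k, and let m ∈ 𝒜(S) = {n_1, …, n_k}. If L(s + m) = L(s) + 1 for all s ∈ S, then m = n_1. -/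
/-!
Iterating the hypothesis from `L(0) = 0` gives `L(t m) = t` for every `t`. Taking `t = n_1`, the
element `n_1 m` also has the factorization consisting of `m` copies of `n_1`, so
`m ≤ L(n_1 m) = n_1`; as `n_1` is the smallest generator, `m = n_1`.
-/

namespace PaperNS

/-- The numerical semigroup `⟨n_1, …, n_k⟩` generated by `n`. -/
def NS {k : ℕ} (n : Fin k → ℕ) : AddSubmonoid ℕ := AddSubmonoid.closure (Set.range n)

/-- The set of factorizations of `s` over the generators `n`. -/
def nsZ {k : ℕ} (n : Fin k → ℕ) (s : ℕ) : Set (Fin k → ℕ) :=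
  {c | ∑ i, c i * n i = s}

/-- The longest factorization length of `s`. -/
noncomputable def nsL {k : ℕ} (n : Fin k → ℕ) (s : ℕ) : ℕ :=
  sSup ((fun c => ∑ i, c i) '' nsZ n s)

/-- The shortest factorization length of `s`. -/
noncomputable def nsl {k : ℕ} (n : Fin k → ℕ) (s : ℕ) : ℕ :=
  sInf ((fun c => ∑ i, c i) '' nsZ n s)

/-- `{n_1, …, n_k}` minimally generates: no proper subset generates the same monoid. -/
def MinimallyGenerates {k : ℕ} (n : Fin k → ℕ) : Prop :=
  ∀ T : Set ℕ, T ⊂ Set.range n → AddSubmonoid.closure T ≠ NS n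

section Lengths

variable {k : ℕ} {n : Fin k → ℕ}

theorem length_le_of_mem_nsZ (hpos : ∀ i, 0 < n i) {s : ℕ} {c : Fin k → ℕ}
    (hc : c ∈ nsZ n s) : ∑ i, c i ≤ s :=
  calc ∑ i, c i ≤ ∑ i, c i * n i :=
        Finset.sum_le_sum fun i _ => Nat.le_mul_of_pos_right _ (hpos i)
    _ = s := hc

theorem bddAbove_lengths (hpos : ∀ i, 0 < n i) (s : ℕ) :
    BddAbove ((fun c => ∑ i, c i) '' nsZ n s) :=
  ⟨s, by rintro _ ⟨c, hc, rfl⟩; exact length_le_of_mem_nsZ hpos hc⟩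

theorem length_le_nsL (hpos : ∀ i, 0 < n i) {s : ℕ} {c : Fin k → ℕ} (hc : c ∈ nsZ n s) :
    ∑ i, c i ≤ nsL n s :=
  le_csSup (bddAbove_lengths hpos s) ⟨c, hc, rfl⟩

theorem nsL_zero (hpos : ∀ i, 0 < n i) : nsL n 0 = 0 :=
  Nat.le_zero.mp <| csSup_le' <| by
    rintro _ ⟨c, hc, rfl⟩; exact length_le_of_mem_nsZ hpos hc

theorem le_nsL_mul (hpos : ∀ i, 0 < n i) (i : Fin k) (t : ℕ) : t ≤ nsL n (t * n i) := by
  have hsingle : Pi.single i t ∈ nsZ n (t * n i) := by simp [nsZ, Pi.single_apply]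
  simpa using length_le_nsL hpos hsingle

theorem nsL_mul_of_nsL_add (hpos : ∀ i, 0 < n i) {m : ℕ} (hm : m ∈ NS n)
    (hL : ∀ s ∈ NS n, nsL n (s + m) = nsL n s + 1) (t : ℕ) : nsL n (t * m) = t := by
  induction t with
  | zero => simpa using nsL_zero hpos
  | succ t ih =>
    have htm : t * m ∈ NS n := by simpa using AddSubmonoid.nsmul_mem (NS n) hm t
    rw [Nat.succ_mul, hL _ htm, ih]

end Lengths

theorem statement8_general {k : ℕ} (hk : 0 < k) (n : Fin k → ℕ)
    (hpos : ∀ i, 0 < n i) (hmono : StrictMono n)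
    (m : ℕ) (hm : m ∈ Set.range n)
    (hL : ∀ s ∈ NS n, nsL n (s + m) = nsL n s + 1) :
    m = n ⟨0, hk⟩ := by
  have hLm := nsL_mul_of_nsL_add hpos (AddSubmonoid.subset_closure hm) hL (n ⟨0, hk⟩)
  have hle : m ≤ n ⟨0, hk⟩ := by
    calc m ≤ nsL n (m * n ⟨0, hk⟩) := le_nsL_mul hpos ⟨0, hk⟩ m
      _ = n ⟨0, hk⟩ := by rw [mul_comm, hLm]
  obtain ⟨i, rfl⟩ := hm
  exact hle.antisymm (hmono.monotone (Nat.zero_le i.val))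

theorem statement8 {k : ℕ} (hk : 0 < k) (n : Fin k → ℕ)
    (hpos : ∀ i, 0 < n i) (hmono : StrictMono n)
    (hgcd : Finset.univ.gcd n = 1) (hmin : MinimallyGenerates n)
    (m : ℕ) (hm : m ∈ Set.range n)
    (hL : ∀ s ∈ NS n, nsL n (s + m) = nsL n s + 1) :
    m = n ⟨0, hk⟩ :=
  statement8_general hk n hpos hmono m hm hL

end PaperNS
end

section
/- Let S = ⟨n_1, …, n_k⟩ be a numerical semigroup minimally generated by n_1, …, n_k ∈ ℕ with n_1 < ⋯ < n_k, and let m ∈ 𝒜(S) = {n_1, …, n_k}. If ℓ(s + m) = ℓ(s) + 1 for all s ∈ S, then m = n_k. -/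
namespace PaperNS

theorem statement9 {k : ℕ} (hk : 0 < k) (n : Fin k → ℕ)
    (hpos : ∀ i, 0 < n i) (hmono : StrictMono n)
    (hgcd : Finset.univ.gcd n = 1) (hmin : MinimallyGenerates n)
    (m : ℕ) (hm : m ∈ Set.range n)
    (hl : ∀ s ∈ NS n, nsl n (s + m) = nsl n s + 1) :
    m = n ⟨k - 1, by omega⟩ := by
  obtain ⟨i, rfl⟩ := hm
  set last : Fin k := ⟨k - 1, by omega⟩ with hlast
  by_contra hne
  have hi : i < last := by
    rcases lt_or_ge i.val (k - 1) with h | h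
    · exact h
    · exact absurd (congrArg n (Fin.ext (show i.val = k - 1 by omega))) hne
  have hlt : n i < n last := hmono hi
  -- nsl n 0 = 0
  have h0 : nsl n 0 = 0 := by
    have hz : nsZ n 0 = {0} := by
      ext c
      simp only [nsZ, Set.mem_setOf_eq, Set.mem_singleton_iff]
      constructor
      · intro h
        funext j
        have := (Finset.sum_eq_zero_iff.mp h) j (Finset.mem_univ j)
        have hj := hpos j
        have : c j = 0 := by
          by_contra hc
          exact absurd this (by positivity)
        simpa using this
      · rintro rfl; simp
    simp [nsl, hz]
  have hmem : ∀ t : ℕ, t * n i ∈ NS n := by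
    intro t
    have hbase : n i ∈ NS n := AddSubmonoid.subset_closure (Set.mem_range_self i)
    have := nsmul_mem hbase t
    simpa [nsmul_eq_mul] using this
  have hT : ∀ t : ℕ, nsl n (t * n i) = t := by
    intro t
    induction t with
    | zero => simpa using h0
    | succ t ih =>
      have h := hl (t * n i) (hmem t)
      rw [ih] at h
      have harith : (t + 1) * n i = t * n i + n i := by ring
      rw [harith, h]
  have hle : nsl n (n last * n i) ≤ n i := by
    apply Nat.sInf_le
    refine ⟨fun j => if j = last then n i else 0, ?_, ?_⟩
    · show ∑ j, (if j = last then n i else 0) * n j = n last * n i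
      rw [Finset.sum_eq_single last]
      · simp [mul_comm]
      · intro b _ hb; simp [hb]
      · simp
    · simp
  rw [hT (n last)] at hle
  omega

end PaperNS
end

section
/- Let S be a commutative, cancellative monoid and let m ∈ S be a nonzero element such that no element of S is infinitely divisible by m. Then π(Ap(S;m)) is a subsemigroup of gp(S)/⟨m⟩ (i.e. it is closed under addition). -/
namespace PaperKunz

variable {G : Type*} [AddCommGroup G]

/-- The canonical projection `π : gp(S) → gp(S)/⟨m⟩`. -/
def qproj (m : G) : G →+ G ⧸ AddSubgroup.zmultiples m :=
  QuotientAddGroup.mk' (AddSubgroup.zmultiples m)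

/-- The Apéry set `Ap(S; m) = {s ∈ S : s - m ∉ S}`. -/
def ApSet (S : AddSubmonoid G) (m : G) : Set G := {s | s ∈ S ∧ s - m ∉ S}

/-- `s` is infinitely divisible by `m` in `S`. -/
def InfDiv (S : AddSubmonoid G) (m : G) (s : G) : Prop := ∀ p : ℕ, s - p • m ∈ S

theorem statement12 (S : AddSubmonoid G) (m : G) (hmS : m ∈ S) (hm0 : m ≠ 0)
    (hgen : AddSubgroup.closure (S : Set G) = ⊤)
    (hnd : ∀ s ∈ S, ¬ InfDiv S m s) :
    ∀ x ∈ ⇑(qproj m) '' ApSet S m, ∀ y ∈ ⇑(qproj m) '' ApSet S m,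
      x + y ∈ ⇑(qproj m) '' ApSet S m := by
  rintro x ⟨a, ⟨haS, -⟩, rfl⟩ y ⟨b, ⟨hbS, -⟩, rfl⟩
  have hsS : a + b ∈ S := S.add_mem haS hbS
  -- there exists p with a + b - p • m ∉ S
  have hex : ∃ p : ℕ, a + b - p • m ∉ S := by
    by_contra h
    push_neg at h
    exact hnd _ hsS h
  classical
  let p₀ := Nat.find hex
  have hp₀ : a + b - p₀ • m ∉ S := Nat.find_spec hex
  have hp₀pos : 0 < p₀ := by
    rcases Nat.eq_zero_or_pos p₀ with h | h
    · exfalso; apply hp₀; rw [h]; simpa using hsS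
    · exact h
  obtain ⟨p, hpe⟩ : ∃ p, p₀ = p + 1 := ⟨p₀ - 1, (Nat.succ_pred_eq_of_pos hp₀pos).symm⟩
  rw [hpe] at hp₀
  have hpS : a + b - p • m ∈ S := by
    by_contra h
    have : p < p₀ := hpe ▸ Nat.lt_succ_self p
    exact Nat.find_min hex this h
  refine ⟨a + b - p • m, ⟨hpS, ?_⟩, ?_⟩
  · intro h
    apply hp₀
    have : a + b - p • m - m = a + b - (p + 1) • m := by
      push_cast [add_smul, one_smul]; abel
    rwa [this] at h
  · have hker : (p • m : G) ∈ AddSubgroup.zmultiples m :=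
      ⟨(p : ℤ), by simp⟩
    show qproj m (a + b - p • m) = qproj m a + qproj m b
    rw [← map_add]
    simp only [qproj]
    rw [QuotientAddGroup.mk'_eq_mk' ]
    exact ⟨p • m, hker, by abel⟩

end PaperKunz
end

section
/- Suppose the Kunz polytope P_{G,m,A,{r_α}} is admissible, let (x_α) be an integer point of P_{G,m,A,{r_α}}, and set 𝒫 := Kunz(ρ(x_α); m). Then the operation ⊕ on 𝒫^∞ := 𝒫 ∪ {∞} is commutative and associative, and for α, β ∈ 𝒫, α divides β in (𝒫^∞, ⊕) if and only if α ≼ β; that is, the divisibility preorder of 𝒫 under ⊕ coincides with the preorder ≼ of Kunz(ρ(x_α); m). -/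
namespace PaperKunz

variable {G : Type*} [AddCommGroup G]

/-- The Kunz polytope `P_{G,m,A,{r_α}}`, cut out in `ℝ^A` by the inequalities
`x_α + x_β + d_{α,β} ≥ x_{α+β}`. -/
def KPoly (m : G) (A : AddSubmonoid (G ⧸ AddSubgroup.zmultiples m)) (d : A → A → ℤ) :
    Set (A → ℝ) :=
  {x | ∀ α β : A, x (α + β) ≤ x α + x β + (d α β : ℝ)}

/-- A face of the Kunz polytope: the subset where the inequalities indexed by some
`C ⊆ A × A` hold with equality. -/
def IsFace (m : G) (A : AddSubmonoid (G ⧸ AddSubgroup.zmultiples m)) (d : A → A → ℤ)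
    (F : Set (A → ℝ)) : Prop :=
  ∃ C : Set (A × A),
    F = {x ∈ KPoly m A d | ∀ p ∈ C, x p.1 + x p.2 + (d p.1 p.2 : ℝ) = x (p.1 + p.2)}

/-- The interior of a face `F`: the points of `F` not contained in any face properly
contained in `F`. -/
def FaceInt (m : G) (A : AddSubmonoid (G ⧸ AddSubgroup.zmultiples m)) (d : A → A → ℤ)
    (F : Set (A → ℝ)) : Set (A → ℝ) :=
  {x ∈ F | ∀ F', IsFace m A d F' → F' ⊂ F → x ∉ F'}

/-- The correspondence `ρ` sending an integer point `(x_α)` to the monoid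
`⟨{m} ∪ {x_α·m + r_α : α ∈ A}⟩`. -/
def rho (m : G) (A : AddSubmonoid (G ⧸ AddSubgroup.zmultiples m)) (r : A → G)
    (x : A → ℤ) : AddSubmonoid G :=
  AddSubmonoid.closure ({m} ∪ Set.range fun α : A => x α • m + r α)

/-- The conditions in the statement of the correspondence: `m ∈ S`, `gp(S) = G`,
`A = π(Ap(S;m))`, and no element of `S` is infinitely divisible by `m`. -/
def GoodMonoid (m : G) (A : AddSubmonoid (G ⧸ AddSubgroup.zmultiples m))
    (S : AddSubmonoid G) : Prop :=
  m ∈ S ∧ AddSubgroup.closure (S : Set G) = ⊤ ∧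
    ⇑(qproj m) '' ApSet S m = (A : Set (G ⧸ AddSubgroup.zmultiples m)) ∧
    ∀ s ∈ S, ¬ InfDiv S m s

/-- Admissibility of the Kunz polytope. -/
def Admissible (m : G) (A : AddSubmonoid (G ⧸ AddSubgroup.zmultiples m)) (r : A → G)
    (d : A → A → ℤ) : Prop :=
  ∃ x : A → ℤ, (fun α => (x α : ℝ)) ∈ KPoly m A d ∧ GoodMonoid m A (rho m A r x)

/-- The Kunz preorder `≼` of `Kunz(S; m)` on `G/⟨m⟩`:
`π(s) ≼ π(t)` for `s, t ∈ Ap(S;m)` iff `t - s ∈ S`. -/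
def KunzLE (S : AddSubmonoid G) (m : G) (α β : G ⧸ AddSubgroup.zmultiples m) : Prop :=
  ∃ s t : G, s ∈ ApSet S m ∧ t ∈ ApSet S m ∧ qproj m s = α ∧ qproj m t = β ∧ t - s ∈ S

open Classical in
/-- The operation `⊕` on `𝒫^∞ = 𝒫 ∪ {∞}` (with `∞` encoded as `none`):
`α ⊕ β = α + β` if `α ≼ α + β`, and `∞` otherwise. -/
noncomputable def oplus (S : AddSubmonoid G) (m : G)
    (A : AddSubmonoid (G ⧸ AddSubgroup.zmultiples m)) :
    Option A → Option A → Option A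
  | some α, some β =>
      if KunzLE S m (α : G ⧸ AddSubgroup.zmultiples m) ((α + β : A) : G ⧸ AddSubgroup.zmultiples m)
      then some (α + β) else none
  | _, _ => none

/-- A unit of `(𝒫^∞, ⊕)`. -/
def oUnit (S : AddSubmonoid G) (m : G) (A : AddSubmonoid (G ⧸ AddSubgroup.zmultiples m))
    (a : Option A) : Prop :=
  ∃ b, oplus S m A a b = some 0

/-- An atom of `(𝒫^∞, ⊕)`: a nonzero nonunit which splits only through units. -/
def oAtom (S : AddSubmonoid G) (m : G) (A : AddSubmonoid (G ⧸ AddSubgroup.zmultiples m))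
    (a : Option A) : Prop :=
  a ≠ some 0 ∧ ¬ oUnit S m A a ∧
    ∀ b c, oplus S m A b c = a → oUnit S m A b ∨ oUnit S m A c

/-- The iterated `⊕`-sum of a list of elements of `𝒫`. -/
noncomputable def oplusList (S : AddSubmonoid G) (m : G)
    (A : AddSubmonoid (G ⧸ AddSubgroup.zmultiples m)) (l : List A) : Option A :=
  l.foldr (fun α acc => oplus S m A (some α) acc) (some 0)

/-- `Z_{𝒫^∞}(∞)`: finitely supported tuples over the atoms of `𝒫^∞` whose iterated
`⊕`-sum equals `∞`. -/
def Zinf (S : AddSubmonoid G) (m : G) (A : AddSubmonoid (G ⧸ AddSubgroup.zmultiples m)) :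
    Set (A →₀ ℕ) :=
  {c | (∀ α ∈ c.support, oAtom S m A (some α)) ∧
    ∃ l : List A, (l : Multiset A) = Finsupp.toMultiset c ∧ oplusList S m A l = none}

/-- `min_≤ Z_{𝒫^∞}(∞)`: its minimal elements under the coordinatewise order. -/
def minZinf (S : AddSubmonoid G) (m : G)
    (A : AddSubmonoid (G ⧸ AddSubgroup.zmultiples m)) : Set (A →₀ ℕ) :=
  {c ∈ Zinf S m A | ∀ c' ∈ Zinf S m A, c' ≤ c → c' = c}

/-- The preorder `⊑_S` on `min_≤ Z_{𝒫^∞}(∞)`: with `β = Σ c_α·α`, `β' = Σ c'_α·α`,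
`δ = β' - β` and `b` the unique integer with `b·m = r_δ + Σ (c_α - c'_α)·r_α`,
`(c_α) ⊑_S (c'_α)` iff `-x_δ + Σ (c'_α - c_α)·x_α ≥ b`. -/
def sqle (m : G) (A : AddSubmonoid (G ⧸ AddSubgroup.zmultiples m)) (r : A → G)
    (x : A → ℤ) (c c' : A →₀ ℕ) : Prop :=
  ∃ (δ : A) (b : ℤ),
    (c.sum fun α n => n • α) + δ = (c'.sum fun α n => n • α) ∧
    b • m = r δ + ((c.sum fun α n => n • r α) - c'.sum fun α n => n • r α) ∧
    b ≤ - x δ + ((c'.sum fun α n => (n : ℤ) * x α) - c.sum fun α n => (n : ℤ) * x α)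

/-- `pmin_{⊑_S} min_≤ Z_{𝒫^∞}(∞)`: the pseudominimal elements. -/
def pminZ (S : AddSubmonoid G) (m : G) (A : AddSubmonoid (G ⧸ AddSubgroup.zmultiples m))
    (r : A → G) (x : A → ℤ) : Set (A →₀ ℕ) :=
  {c ∈ minZinf S m A | ∀ c' ∈ minZinf S m A, sqle m A r x c' c → sqle m A r x c c'}

/-- A unit of the monoid `S`. -/
def subUnit (S : AddSubmonoid G) (u : G) : Prop := u ∈ S ∧ -u ∈ S

/-- An atom of the monoid `S`. -/
def subAtom (S : AddSubmonoid G) (a : G) : Prop :=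
  a ∈ S ∧ a ≠ 0 ∧ ¬ subUnit S a ∧
    ∀ b c, b ∈ S → c ∈ S → b + c = a → subUnit S b ∨ subUnit S c

/-- The set of factorizations of `s` into atoms of the (reduced) monoid `S`. -/
def ZS (S : AddSubmonoid G) (s : G) : Set (G →₀ ℕ) :=
  {c | (∀ a ∈ c.support, subAtom S a) ∧ (c.sum fun a n => n • a) = s}

/-- The longest factorization length `L(s)` in `S`. -/
noncomputable def LS (S : AddSubmonoid G) (s : G) : ℕ :=
  sSup ((fun c : G →₀ ℕ => c.sum fun _ n => n) '' ZS S s)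

/-- The shortest factorization length `ℓ(s)` in `S`. -/
noncomputable def lS (S : AddSubmonoid G) (s : G) : ℕ :=
  sInf ((fun c : G →₀ ℕ => c.sum fun _ n => n) '' ZS S s)

/-- `L(s)` is (defined and) finite in `S`. -/
def LFiniteS (S : AddSubmonoid G) (s : G) : Prop :=
  (ZS S s).Nonempty ∧ BddAbove ((fun c : G →₀ ℕ => c.sum fun _ n => n) '' ZS S s)

/-- The set of factorization lengths of `v` in `(𝒫^∞, ⊕)`. -/
def oLenSet (S : AddSubmonoid G) (m : G) (A : AddSubmonoid (G ⧸ AddSubgroup.zmultiples m))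
    (v : Option A) : Set ℕ :=
  {n | ∃ l : List A, (∀ α ∈ l, oAtom S m A (some α)) ∧ oplusList S m A l = v ∧ l.length = n}

/-- The longest factorization length `L_{𝒫^∞}(v)`. -/
noncomputable def oL (S : AddSubmonoid G) (m : G)
    (A : AddSubmonoid (G ⧸ AddSubgroup.zmultiples m)) (v : Option A) : ℕ :=
  sSup (oLenSet S m A v)

/-- The shortest factorization length `ℓ_{𝒫^∞}(v)`. -/
noncomputable def oell (S : AddSubmonoid G) (m : G)
    (A : AddSubmonoid (G ⧸ AddSubgroup.zmultiples m)) (v : Option A) : ℕ :=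
  sInf (oLenSet S m A v)

/-!
For an integer point `x` of the Kunz polytope put `S = ρ(x)` and `w γ = x γ • m + r γ`
(`w 0 = 0`). The polytope inequalities say exactly that `w α + w β = n(α, β) • m + w (α + β)`
with `n(α, β) ≥ 0`, so `S` is the union of the progressions `w γ + ℕ • m` and `w γ` is the
Apéry element of the class `γ`. Then `α ≼ α + β` iff `n(α, β) = 0`, and adding
`w α + w β + w γ` in both orders gives the cocycle identity
`n(α, β) + n(α + β, γ) = n(β, γ) + n(α, β + γ)` between natural numbers, so both sides vanish
together: this is associativity of `⊕`. For divisibility, `α ≼ β` puts `w β - w α` in `S`, and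
its class `γ` satisfies `α + γ = β`.
-/

lemma nsmul_add_eq_self_iff {m : G} (hm : ¬ IsOfFinAddOrder m) {n : ℕ} {g : G} :
    n • m + g = g ↔ n = 0 := by
  rw [add_eq_right, ← zero_nsmul m]
  exact (injective_nsmul_iff_not_isOfFinAddOrder.2 hm).eq_iff

lemma qproj_self (m : G) : qproj m m = 0 :=
  (QuotientAddGroup.eq_zero_iff m).2 (AddSubgroup.mem_zmultiples m)

lemma qproj_nsmul_add (m g : G) (n : ℕ) : qproj m (n • m + g) = qproj m g := by
  rw [map_add, map_nsmul, qproj_self, nsmul_zero, zero_add]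

structure IsAperyMap (S : AddSubmonoid G) (m : G)
    {A : AddSubmonoid (G ⧸ AddSubgroup.zmultiples m)} (w : A → G) : Prop where
  qproj_eq : ∀ γ, qproj m (w γ) = γ
  mem_iff : ∀ s, s ∈ S ↔ ∃ (n : ℕ) (γ : A), s = n • m + w γ

namespace IsAperyMap

variable {m : G} {A : AddSubmonoid (G ⧸ AddSubgroup.zmultiples m)} {S : AddSubmonoid G}
  {w : A → G}

lemma mem_iff_of_qproj_eq (h : IsAperyMap S m w) {s : G} {γ : A} (hs : qproj m s = γ) :
    s ∈ S ↔ ∃ n : ℕ, s = n • m + w γ := by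
  rw [h.mem_iff]
  constructor
  · rintro ⟨n, γ', rfl⟩
    obtain rfl : γ' = γ := Subtype.ext (by rw [← hs, qproj_nsmul_add, h.qproj_eq])
    exact ⟨n, rfl⟩
  · rintro ⟨n, rfl⟩
    exact ⟨n, γ, rfl⟩

lemma apery_mem (h : IsAperyMap S m w) (γ : A) : w γ ∈ S :=
  (h.mem_iff _).2 ⟨0, γ, by rw [zero_nsmul, zero_add]⟩

lemma apery_mem_apSet (hm : ¬ IsOfFinAddOrder m) (h : IsAperyMap S m w) (γ : A) :
    w γ ∈ ApSet S m := by
  refine ⟨h.apery_mem γ, fun hmem => ?_⟩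
  obtain ⟨n, hn⟩ :=
    (h.mem_iff_of_qproj_eq (by rw [map_sub, h.qproj_eq, qproj_self, sub_zero])).1 hmem
  have : (n + 1) • m + w γ = w γ := by rw [succ_nsmul, add_comm (n • m), add_assoc, ← hn]; abel
  exact absurd ((nsmul_add_eq_self_iff hm).1 this) n.succ_ne_zero

lemma eq_of_mem_apSet (h : IsAperyMap S m w) {s : G} (hs : s ∈ ApSet S m) {γ : A}
    (hq : qproj m s = γ) : s = w γ := by
  obtain ⟨_ | n, rfl⟩ := (h.mem_iff_of_qproj_eq hq).1 hs.1
  · rw [zero_nsmul, zero_add]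
  · exact absurd ((h.mem_iff _).2 ⟨n, γ, by rw [succ_nsmul]; abel⟩) hs.2

lemma sub_mem_of_kunzLE (h : IsAperyMap S m w) {α β : A} (hK : KunzLE S m α β) :
    w β - w α ∈ S := by
  obtain ⟨s, t, hs, ht, hsα, htβ, hst⟩ := hK
  rwa [h.eq_of_mem_apSet hs hsα, h.eq_of_mem_apSet ht htβ] at hst

lemma kunzLE_of_sub_mem (hm : ¬ IsOfFinAddOrder m) (h : IsAperyMap S m w) {α β : A}
    (hmem : w β - w α ∈ S) : KunzLE S m α β :=
  ⟨w α, w β, h.apery_mem_apSet hm α, h.apery_mem_apSet hm β, h.qproj_eq α, h.qproj_eq β, hmem⟩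

lemma exists_add_eq_of_kunzLE (h : IsAperyMap S m w) {α β : A} (hK : KunzLE S m α β) :
    ∃ γ, α + γ = β := by
  obtain ⟨n, γ, hγ⟩ := (h.mem_iff _).1 (h.sub_mem_of_kunzLE hK)
  have hq := congrArg (qproj m) hγ
  rw [map_sub, h.qproj_eq, h.qproj_eq, qproj_nsmul_add, h.qproj_eq] at hq
  exact ⟨γ, Subtype.ext (by rw [AddSubmonoid.coe_add, ← hq, add_sub_cancel])⟩

lemma exists_add_eq (h : IsAperyMap S m w) (α β : A) :
    ∃ n : ℕ, w α + w β = n • m + w (α + β) :=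
  (h.mem_iff_of_qproj_eq (by rw [map_add, h.qproj_eq, h.qproj_eq, AddSubmonoid.coe_add])).1
    (add_mem (h.apery_mem α) (h.apery_mem β))

lemma kunzLE_add_iff (hm : ¬ IsOfFinAddOrder m) (h : IsAperyMap S m w) (α β : A) :
    KunzLE S m α ↑(α + β) ↔ w α + w β = w (α + β) := by
  refine ⟨fun hK => ?_, fun heq => h.kunzLE_of_sub_mem hm ?_⟩
  · obtain ⟨k, hk⟩ := (h.mem_iff_of_qproj_eq (γ := β)
      (by rw [map_sub, h.qproj_eq, h.qproj_eq, AddSubmonoid.coe_add, add_sub_cancel_left])).1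
      (h.sub_mem_of_kunzLE hK)
    obtain ⟨n, hn⟩ := h.exists_add_eq α β
    have hloop : (k + n) • m + w (α + β) = w (α + β) := by
      rw [add_nsmul, add_assoc, ← hn, (sub_eq_iff_eq_add.1 hk)]
      abel
    have hn0 : n = 0 := by
      have := (nsmul_add_eq_self_iff hm).1 hloop
      omega
    rw [hn, hn0, zero_nsmul, zero_add]
  · rw [← heq, add_sub_cancel_left]
    exact h.apery_mem β

lemma kunzLE_add_comm (hm : ¬ IsOfFinAddOrder m) (h : IsAperyMap S m w) (α β : A)
    (hK : KunzLE S m α ↑(α + β)) : KunzLE S m β ↑(β + α) := by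
  rwa [h.kunzLE_add_iff hm, add_comm β, add_comm (w β), ← h.kunzLE_add_iff hm]

lemma kunzLE_add_assoc_iff (hm : ¬ IsOfFinAddOrder m) (h : IsAperyMap S m w) (α β γ : A) :
    KunzLE S m α ↑(α + β) ∧ KunzLE S m ↑(α + β) ↑(α + β + γ) ↔
      KunzLE S m β ↑(β + γ) ∧ KunzLE S m α ↑(α + (β + γ)) := by
  simp only [h.kunzLE_add_iff hm]
  obtain ⟨n₁, h₁⟩ := h.exists_add_eq α β
  obtain ⟨n₂, h₂⟩ := h.exists_add_eq (α + β) γ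
  obtain ⟨n₃, h₃⟩ := h.exists_add_eq β γ
  obtain ⟨n₄, h₄⟩ := h.exists_add_eq α (β + γ)
  have hcocycle : n₁ + n₂ = n₃ + n₄ := by
    refine injective_nsmul_iff_not_isOfFinAddOrder.2 hm
      (add_right_cancel (b := w (α + β + γ)) ?_)
    calc (n₁ + n₂) • m + w (α + β + γ) = n₁ • m + (w (α + β) + w γ) := by
          rw [h₂, add_nsmul]; abel
      _ = w α + (w β + w γ) := by rw [← add_assoc, ← h₁]; abel
      _ = (n₃ + n₄) • m + w (α + β + γ) := by
          rw [h₃, add_left_comm, h₄, add_nsmul, add_assoc, add_assoc α]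
  rw [h₁, h₂, h₃, h₄]
  simp only [nsmul_add_eq_self_iff hm]
  omega

end IsAperyMap

section Oplus

variable {m : G} {A : AddSubmonoid (G ⧸ AddSubgroup.zmultiples m)} {S : AddSubmonoid G}

@[simp]
lemma oplus_none_left (b : Option A) : oplus S m A none b = none := by
  cases b <;> rfl

@[simp]
lemma oplus_none_right (a : Option A) : oplus S m A a none = none := by
  cases a <;> rfl

lemma oplus_comm_of_kunzLE (h : ∀ α β : A, KunzLE S m α ↑(α + β) → KunzLE S m β ↑(β + α))
    (a b : Option A) : oplus S m A a b = oplus S m A b a := by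
  rcases a with _ | α <;> rcases b with _ | β <;> try rfl
  simp only [oplus, add_comm β α]
  have := h α β
  have := h β α
  split_ifs <;> simp_all [add_comm]

lemma oplus_assoc_of_kunzLE
    (h : ∀ α β γ : A, KunzLE S m α ↑(α + β) ∧ KunzLE S m ↑(α + β) ↑(α + β + γ) ↔
      KunzLE S m β ↑(β + γ) ∧ KunzLE S m α ↑(α + (β + γ)))
    (a b c : Option A) :
    oplus S m A (oplus S m A a b) c = oplus S m A a (oplus S m A b c) := by
  rcases a with _ | α <;> rcases b with _ | β <;> rcases c with _ | γ <;> try simp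
  have hαβγ := h α β γ
  simp only [oplus]
  by_cases h₁ : KunzLE S m α ↑(α + β) <;> by_cases h₂ : KunzLE S m ↑(α + β) ↑(α + β + γ) <;>
    by_cases h₃ : KunzLE S m β ↑(β + γ) <;> by_cases h₄ : KunzLE S m α ↑(α + (β + γ)) <;>
    simp only [h₁, h₂, h₃, h₄, if_true, if_false] at hαβγ ⊢ <;> simp_all [add_assoc]

lemma exists_oplus_eq_some_iff (α β : A) :
    (∃ γ : Option A, oplus S m A (some α) γ = some β) ↔ KunzLE S m α β ∧ ∃ γ, α + γ = β := by
  constructor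
  · rintro ⟨_ | γ, hγ⟩
    · simp at hγ
    · simp only [oplus] at hγ
      split_ifs at hγ with hK
      obtain rfl := Option.some.inj hγ
      exact ⟨hK, γ, rfl⟩
  · rintro ⟨hK, γ, rfl⟩
    exact ⟨some γ, if_pos hK⟩

end Oplus

section KunzPolytope

variable {m : G} {A : AddSubmonoid (G ⧸ AddSubgroup.zmultiples m)} {r : A → G}
  {d : A → A → ℤ} {x : A → ℤ}

open Classical in
/-- The generator `x 0 • m + r 0` of the class `0` is a nonnegative multiple of `m`
(`generator_zero`), not necessarily `0`, hence the special case. -/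
noncomputable def rhoApery (m : G) {A : AddSubmonoid (G ⧸ AddSubgroup.zmultiples m)}
    (r : A → G) (x : A → ℤ) (γ : A) : G :=
  if γ = 0 then 0 else x γ • m + r γ

lemma rhoApery_zero : rhoApery m r x 0 = 0 := if_pos rfl

lemma rhoApery_of_ne_zero {γ : A} (hγ : γ ≠ 0) : rhoApery m r x γ = x γ • m + r γ := if_neg hγ

lemma int_le_of_mem_kPoly (hx : (fun α => (x α : ℝ)) ∈ KPoly m A d) (α β : A) :
    x (α + β) ≤ x α + x β + d α β := by
  have h : (x (α + β) : ℝ) ≤ x α + x β + d α β := hx α β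
  exact_mod_cast h

lemma generator_add (hd : ∀ α β : A, r α + r β = d α β • m + r (α + β)) (α β : A) :
    (x α • m + r α) + (x β • m + r β) =
      (x α + x β + d α β - x (α + β)) • m + (x (α + β) • m + r (α + β)) := by
  rw [add_add_add_comm, hd]
  module

lemma generator_zero (hd : ∀ α β : A, r α + r β = d α β • m + r (α + β))
    (hx : (fun α => (x α : ℝ)) ∈ KPoly m A d) : ∃ n : ℕ, x 0 • m + r 0 = n • m := by
  have hr₀ : r 0 = d 0 0 • m := add_right_cancel (b := r 0) (by simpa using hd 0 0)
  have hn : 0 ≤ x 0 + d 0 0 := by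
    have := int_le_of_mem_kPoly hx 0 0
    rw [add_zero] at this
    omega
  lift x 0 + d 0 0 to ℕ using hn with n hn_eq
  exact ⟨n, by rw [hr₀, ← add_zsmul, ← hn_eq, natCast_zsmul]⟩

lemma rhoApery_add (hd : ∀ α β : A, r α + r β = d α β • m + r (α + β))
    (hx : (fun α => (x α : ℝ)) ∈ KPoly m A d) (α β : A) :
    ∃ n : ℕ, rhoApery m r x α + rhoApery m r x β = n • m + rhoApery m r x (α + β) := by
  by_cases hα : α = 0
  · exact ⟨0, by rw [hα, rhoApery_zero, zero_add, zero_add, zero_nsmul, zero_add]⟩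
  by_cases hβ : β = 0
  · exact ⟨0, by rw [hβ, rhoApery_zero, add_zero, add_zero, zero_nsmul, zero_add]⟩
  have hle := int_le_of_mem_kPoly hx α β
  lift x α + x β + d α β - x (α + β) to ℕ using (by omega) with c hc
  rw [rhoApery_of_ne_zero hα, rhoApery_of_ne_zero hβ, generator_add hd, ← hc, natCast_zsmul]
  by_cases hαβ : α + β = 0
  · obtain ⟨n, hn⟩ := generator_zero hd hx
    refine ⟨c + n, ?_⟩
    rw [hαβ, hn, rhoApery_zero, add_zero, add_nsmul]
  · exact ⟨c, by rw [rhoApery_of_ne_zero hαβ]⟩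

lemma self_mem_rho : m ∈ rho m A r x :=
  AddSubmonoid.subset_closure (Set.mem_union_left _ rfl)

lemma generator_mem_rho (γ : A) : x γ • m + r γ ∈ rho m A r x :=
  AddSubmonoid.subset_closure (Set.mem_union_right _ ⟨γ, rfl⟩)

lemma rhoApery_mem_rho (γ : A) : rhoApery m r x γ ∈ rho m A r x := by
  by_cases hγ : γ = 0
  · rw [hγ, rhoApery_zero]
    exact zero_mem _
  · rw [rhoApery_of_ne_zero hγ]
    exact generator_mem_rho γ

lemma mem_rho_iff (hd : ∀ α β : A, r α + r β = d α β • m + r (α + β))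
    (hx : (fun α => (x α : ℝ)) ∈ KPoly m A d) (s : G) :
    s ∈ rho m A r x ↔ ∃ (n : ℕ) (γ : A), s = n • m + rhoApery m r x γ := by
  refine ⟨fun hs => ?_, ?_⟩
  · induction hs using AddSubmonoid.closure_induction with
    | mem y hy =>
      rcases hy with rfl | ⟨γ, rfl⟩
      · exact ⟨1, 0, by rw [rhoApery_zero, one_nsmul, add_zero]⟩
      dsimp only
      by_cases hγ : γ = 0
      · subst hγ
        obtain ⟨n, hn⟩ := generator_zero hd hx
        exact ⟨n, 0, by rw [hn, rhoApery_zero, add_zero]⟩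
      · exact ⟨0, γ, by rw [rhoApery_of_ne_zero hγ, zero_nsmul, zero_add]⟩
    | zero => exact ⟨0, 0, by rw [rhoApery_zero, zero_nsmul, zero_add]⟩
    | add _ _ _ _ ih₁ ih₂ =>
      obtain ⟨n₁, γ₁, rfl⟩ := ih₁
      obtain ⟨n₂, γ₂, rfl⟩ := ih₂
      obtain ⟨k, hk⟩ := rhoApery_add hd hx γ₁ γ₂
      refine ⟨n₁ + n₂ + k, γ₁ + γ₂, ?_⟩
      rw [add_nsmul, add_nsmul, add_assoc _ (k • m), ← hk]
      abel
  · rintro ⟨n, γ, rfl⟩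
    exact add_mem (nsmul_mem self_mem_rho n) (rhoApery_mem_rho γ)

lemma isAperyMap_rho (hr : ∀ α : A, qproj m (r α) = (α : G ⧸ AddSubgroup.zmultiples m))
    (hd : ∀ α β : A, r α + r β = d α β • m + r (α + β))
    (hx : (fun α => (x α : ℝ)) ∈ KPoly m A d) :
    IsAperyMap (rho m A r x) m (rhoApery m r x) where
  qproj_eq γ := by
    by_cases hγ : γ = 0
    · rw [hγ, rhoApery_zero, map_zero, ZeroMemClass.coe_zero]
    · rw [rhoApery_of_ne_zero hγ, map_add, map_zsmul, qproj_self, smul_zero, zero_add, hr]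
  mem_iff := mem_rho_iff hd hx

end KunzPolytope

theorem statement16_general (m : G) (hm : ¬ IsOfFinAddOrder m)
    (A : AddSubmonoid (G ⧸ AddSubgroup.zmultiples m))
    (r : A → G) (hr : ∀ α : A, qproj m (r α) = (α : G ⧸ AddSubgroup.zmultiples m))
    (d : A → A → ℤ) (hd : ∀ α β : A, r α + r β = d α β • m + r (α + β))
    (x : A → ℤ) (hx : (fun α => (x α : ℝ)) ∈ KPoly m A d) :
    (∀ a b : Option A, oplus (rho m A r x) m A a b = oplus (rho m A r x) m A b a) ∧
    (∀ a b c : Option A,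
      oplus (rho m A r x) m A (oplus (rho m A r x) m A a b) c =
        oplus (rho m A r x) m A a (oplus (rho m A r x) m A b c)) ∧
    (∀ α β : A,
      (∃ γ : Option A, oplus (rho m A r x) m A (some α) γ = some β) ↔
        KunzLE (rho m A r x) m α β) := by
  have h := isAperyMap_rho hr hd hx
  refine ⟨oplus_comm_of_kunzLE (h.kunzLE_add_comm hm), oplus_assoc_of_kunzLE
    (h.kunzLE_add_assoc_iff hm), fun α β => ?_⟩
  rw [exists_oplus_eq_some_iff]
  exact and_iff_left_of_imp h.exists_add_eq_of_kunzLE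

theorem statement16 (m : G) (hm : ¬ IsOfFinAddOrder m)
    (A : AddSubmonoid (G ⧸ AddSubgroup.zmultiples m))
    (r : A → G) (hr : ∀ α : A, qproj m (r α) = (α : G ⧸ AddSubgroup.zmultiples m))
    (d : A → A → ℤ) (hd : ∀ α β : A, r α + r β = d α β • m + r (α + β))
    (hadm : Admissible m A r d)
    (x : A → ℤ) (hx : (fun α => (x α : ℝ)) ∈ KPoly m A d) :
    (∀ a b : Option A, oplus (rho m A r x) m A a b = oplus (rho m A r x) m A b a) ∧
    (∀ a b c : Option A,
      oplus (rho m A r x) m A (oplus (rho m A r x) m A a b) c =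
        oplus (rho m A r x) m A a (oplus (rho m A r x) m A b c)) ∧
    (∀ α β : A,
      (∃ γ : Option A, oplus (rho m A r x) m A (some α) γ = some β) ↔
        KunzLE (rho m A r x) m α β) :=
  statement16_general m hm A r hr d hd x hx

end PaperKunz
end
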